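/- arXiv:2103.01292 — 2 statements merged into one kernel-verified Lean document; each statement's English description precedes it below -/
import Mathlib

section
/- Maxfun pooling is nonexpansive in the Frobenius norm: for any two images X, X̂ ∈ ℝ^{N×N} and parameters b, s with the pooling regions of stride s ≥ 2b+1, letting P = M_{b,s}(X) and P̂ = M_{b,s}(X̂), one has ‖P − P̂‖_F ≤ ‖X − X̂‖_F. -/
/-!
Each sub-square average of `X - Xhat` is an average over a square contained in the pooling region,
so by Cauchy–Schwarz its square is at most the squared Frobenius norm of `X - Xhat` on that region.
Taking a maximum over `r` is 1-Lipschitz in the sup norm, so the same bound holds for the maxfun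
outputs, and summing over the pairwise disjoint pooling regions gives the claim.
-/

open Finset

noncomputable section

/-- Center coordinate of the `k`-th pooling interval for odd stride `s`. -/
def ctr (s : ℕ) (k : ℤ) : ℤ := k * s + ((s : ℤ) - 1) / 2

/-- The `s × s` pooling region `Q_{k,ℓ}`. -/
def Qreg (s : ℕ) (k l : ℤ) : Finset (ℤ × ℤ) :=
  (Finset.Ico (k * s) (k * s + s)) ×ˢ (Finset.Ico (l * s) (l * s + s))

/-- The centered sub-square `B_{k,ℓ,r}` of side `2r+1`. -/
def Bsq (s : ℕ) (r : ℕ) (k l : ℤ) : Finset (ℤ × ℤ) :=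
  (Finset.Icc (ctr s k - r) (ctr s k + r)) ×ˢ (Finset.Icc (ctr s l - r) (ctr s l + r))

/-- Average of `X` over the centered sub-square of side `2r+1`. -/
def subAvg (s r : ℕ) (X : ℤ × ℤ → ℝ) (k l : ℤ) : ℝ :=
  (∑ p ∈ Bsq s r k l, X p) / ((2 * (r : ℝ) + 1)) ^ 2

/-- Maxfun pooling: maximum over `1 ≤ r ≤ b` of the centered sub-square averages. -/
def maxfun (b s : ℕ) (X : ℤ × ℤ → ℝ) (k l : ℤ) : ℝ :=
  if h : (Finset.Icc 1 b).Nonempty then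
    (Finset.Icc 1 b).sup' h (fun r => subAvg s r X k l)
  else 0

/-- Average pooling over the region `Q_{k,ℓ}`. -/
def avgPool (s : ℕ) (X : ℤ × ℤ → ℝ) (k l : ℤ) : ℝ :=
  (∑ p ∈ Qreg s k l, X p) / (s : ℝ) ^ 2

/-- Max pooling over the region `Q_{k,ℓ}`. -/
def maxPool (s : ℕ) (X : ℤ × ℤ → ℝ) (k l : ℤ) : ℝ :=
  if h : (Qreg s k l).Nonempty then (Qreg s k l).sup' h X else 0

theorem Finset.sq_sum_div_card_le_sum_sq {ι α : Type*} [Field α] [LinearOrder α]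
    [IsStrictOrderedRing α] (t : Finset ι) (f : ι → α) :
    ((∑ i ∈ t, f i) / #t) ^ 2 ≤ ∑ i ∈ t, f i ^ 2 := by
  obtain rfl | ht := t.eq_empty_or_nonempty
  · simp
  exact sum_div_card_sq_le_sum_sq_div_card.trans <|
    div_le_self (sum_nonneg fun i _ => sq_nonneg (f i)) (by exact_mod_cast ht.card_pos)

theorem Finset.abs_sup'_sub_sup'_le {ι α : Type*} [AddCommGroup α] [LinearOrder α]
    [IsOrderedAddMonoid α] {s : Finset ι} (hs : s.Nonempty) {f g : ι → α} {c : α}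
    (h : ∀ i ∈ s, |f i - g i| ≤ c) : |s.sup' hs f - s.sup' hs g| ≤ c := by
  have sub_le : ∀ f g : ι → α, (∀ i ∈ s, |f i - g i| ≤ c) → s.sup' hs f - s.sup' hs g ≤ c :=
    fun f g h => sub_le_iff_le_add.2 <| sup'_le _ _ fun i hi =>
      (sub_le_iff_le_add.1 (le_of_abs_le (h i hi))).trans (add_le_add_right (le_sup' g hi) c)
  exact abs_sub_le_iff.2 ⟨sub_le f g h, sub_le g f fun i hi => abs_sub_comm (g i) (f i) ▸ h i hi⟩

theorem mem_Qreg_iff {s : ℕ} (hs : 0 < s) {p : ℤ × ℤ} {k l : ℤ} :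
    p ∈ Qreg s k l ↔ (p.1 / s, p.2 / s) = (k, l) := by
  have hs' : (0 : ℤ) < s := by exact_mod_cast hs
  simp only [Qreg, mem_product, mem_Ico, Prod.mk.injEq, Int.ediv_eq_iff_of_pos hs']

theorem pairwiseDisjoint_Qreg {s : ℕ} (hs : 0 < s) (K : Set (ℤ × ℤ)) :
    K.PairwiseDisjoint fun kl => Qreg s kl.1 kl.2 := by
  intro a _ c _ hac
  refine disjoint_left.2 fun p hpa hpc => hac ?_
  rw [mem_Qreg_iff hs] at hpa hpc
  exact hpa.symm.trans hpc

theorem Bsq_subset_Qreg {s r : ℕ} (h : 2 * r + 1 ≤ s) (k l : ℤ) : Bsq s r k l ⊆ Qreg s k l := by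
  rintro ⟨i, j⟩ hp
  simp only [Bsq, Qreg, ctr, mem_product, mem_Icc, mem_Ico] at hp ⊢
  omega

theorem card_Bsq (s r : ℕ) (k l : ℤ) : #(Bsq s r k l) = (2 * r + 1) ^ 2 := by
  simp only [Bsq, card_product, Int.card_Icc]
  have side : ∀ a : ℤ, (a + r + 1 - (a - r)).toNat = 2 * r + 1 := fun a => by omega
  rw [side, side, sq]

theorem subAvg_sub (s r : ℕ) (X Y : ℤ × ℤ → ℝ) (k l : ℤ) :
    subAvg s r X k l - subAvg s r Y k l = (∑ p ∈ Bsq s r k l, (X p - Y p)) / #(Bsq s r k l) := by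
  rw [subAvg, subAvg, card_Bsq, ← sub_div, ← sum_sub_distrib]
  push_cast
  rfl

theorem sq_subAvg_sub_le {s r : ℕ} (h : 2 * r + 1 ≤ s) (X Y : ℤ × ℤ → ℝ) (k l : ℤ) :
    (subAvg s r X k l - subAvg s r Y k l) ^ 2 ≤ ∑ p ∈ Qreg s k l, (X p - Y p) ^ 2 := by
  rw [subAvg_sub]
  exact (sq_sum_div_card_le_sum_sq _ _).trans <|
    sum_le_sum_of_subset_of_nonneg (Bsq_subset_Qreg h k l) fun p _ _ => sq_nonneg (X p - Y p)

theorem sq_maxfun_sub_le {b s : ℕ} (h : 2 * b + 1 ≤ s) (X Y : ℤ × ℤ → ℝ) (k l : ℤ) :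
    (maxfun b s X k l - maxfun b s Y k l) ^ 2 ≤ ∑ p ∈ Qreg s k l, (X p - Y p) ^ 2 := by
  have hQ : 0 ≤ ∑ p ∈ Qreg s k l, (X p - Y p) ^ 2 := sum_nonneg fun p _ => sq_nonneg _
  unfold maxfun
  split_ifs with hb
  · refine (Real.sq_le hQ).2 (abs_le.1 (abs_sup'_sub_sup'_le hb fun r hr => ?_))
    have hrs : 2 * r + 1 ≤ s := by have := (mem_Icc.1 hr).2; omega
    exact Real.abs_le_sqrt (sq_subAvg_sub_le hrs X Y k l)
  · simpa using hQ

theorem maxfun_nonexpansive_general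
    (b s : ℕ) (hbs : 2 * b + 1 ≤ s)
    (X Xhat : ℤ × ℤ → ℝ) (K : Finset (ℤ × ℤ)) :
    Real.sqrt (∑ kl ∈ K, (maxfun b s X kl.1 kl.2 - maxfun b s Xhat kl.1 kl.2) ^ 2) ≤
      Real.sqrt (∑ p ∈ K.biUnion (fun kl => Qreg s kl.1 kl.2), (X p - Xhat p) ^ 2) := by
  refine Real.sqrt_le_sqrt ?_
  rw [sum_biUnion (pairwiseDisjoint_Qreg (by omega) K)]
  exact sum_le_sum fun kl _ => sq_maxfun_sub_le hbs X Xhat kl.1 kl.2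

theorem maxfun_nonexpansive
    (b s : ℕ) (hs : Odd s) (hb : 1 ≤ b) (hbs : 2 * b + 1 ≤ s)
    (X Xhat : ℤ × ℤ → ℝ) (K : Finset (ℤ × ℤ)) :
    Real.sqrt (∑ kl ∈ K, (maxfun b s X kl.1 kl.2 - maxfun b s Xhat kl.1 kl.2) ^ 2) ≤
      Real.sqrt (∑ p ∈ K.biUnion (fun kl => Qreg s kl.1 kl.2), (X p - Xhat p) ^ 2) :=
  maxfun_nonexpansive_general b s hbs X Xhat K
end
end

section
/- Hardy–Littlewood maximal inequality: for any f ∈ L¹(ℝ^d) and any α > 0, the Lebesgue measure of the set {x ∈ ℝ^d : M(f)(x) > α} is at most (3^d / α) ∫_{ℝ^d} |f| dm^d, where M(f)(x) = sup over open balls B centered at x of (1/m^d(B)) ∫_B |f| dm^d. -/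
open MeasureTheory Metric
open scoped ENNReal NNReal

noncomputable section

/-- The centered Hardy–Littlewood maximal function: supremum over open balls
centered at `x` of the average of `|f|` over the ball. -/
def hlMaximal {d : ℕ} (f : EuclideanSpace ℝ (Fin d) → ℝ) (x : EuclideanSpace ℝ (Fin d)) :
    ℝ≥0∞ :=
  ⨆ (r : ℝ) (_ : 0 < r), (∫⁻ y in Metric.ball x r, ‖f y‖₊) / volume (Metric.ball x r)

/-! Every point of `{M f > α}` is the centre of a ball `B` with `α |B| < ∫_B |f|`. By the Vitali
covering lemma, some disjoint subfamily of these balls, enlarged by any factor `τ > 3`, covers the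
set; enlarging a ball by `τ` multiplies its volume by `τ ^ d`, so `α |{M f > α}| ≤ τ ^ d ∫ |f|`,
and `τ → 3` gives the bound. Vitali needs bounded radii, so the set is first exhausted by the
points that admit such a ball of radius at most `n`. -/

open Set Filter TopologicalSpace Module
open scoped Topology

section VitaliCovering

variable {X : Type*} [PseudoMetricSpace X] [SeparableSpace X] [MeasurableSpace X]
  [OpensMeasurableSpace X] {μ ν : Measure X} {s : Set X} {c K : ℝ≥0∞} {τ : ℝ}

theorem mul_measure_le_of_forall_exists_ball_of_radius_le (hτ : 3 < τ)
    (hK : ∀ x r, μ (ball x (τ * r)) ≤ K * μ (ball x r)) {R : ℝ}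
    (h : ∀ x ∈ s, ∃ r ∈ Ioc 0 R, c * μ (ball x r) ≤ ν (ball x r)) :
    c * μ s ≤ K * ν univ := by
  choose! r hr hν using h
  obtain ⟨u, hus, hdisj, hcov⟩ := Vitali.exists_disjoint_subfamily_covering_enlargement_ball
    s id r R (fun x hx => (hr x hx).2) τ hτ
  simp only [id] at hdisj hcov
  have hu : u.Countable := hdisj.countable_of_isOpen (fun _ _ => isOpen_ball)
    fun x hx => ⟨x, mem_ball_self (hr x (hus hx)).1⟩
  have hs : s ⊆ ⋃ x ∈ u, ball x (τ * r x) := fun y hy => by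
    obtain ⟨x, hx, hsub⟩ := hcov y hy
    exact mem_biUnion hx (hsub (mem_ball_self (hr y hy).1))
  calc c * μ s ≤ c * ∑' x : u, μ (ball x (τ * r x)) := by
        gcongr; exact (measure_mono hs).trans (measure_biUnion_le _ hu _)
    _ ≤ c * ∑' x : u, K * μ (ball x (r x)) := by gcongr; exact hK _ _
    _ = K * ∑' x : u, c * μ (ball x (r x)) := by
        rw [ENNReal.tsum_mul_left, ENNReal.tsum_mul_left, mul_left_comm]
    _ ≤ K * ∑' x : u, ν (ball x (r x)) := by gcongr with x; exact hν x (hus x.2)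
    _ = K * ν (⋃ x ∈ u, ball x (r x)) := by
        rw [measure_biUnion hu hdisj fun _ _ => measurableSet_ball]
    _ ≤ K * ν univ := by gcongr; exact subset_univ _

theorem mul_measure_le_of_forall_exists_ball (hτ : 3 < τ)
    (hK : ∀ x r, μ (ball x (τ * r)) ≤ K * μ (ball x r))
    (h : ∀ x ∈ s, ∃ r > 0, c * μ (ball x r) ≤ ν (ball x r)) :
    c * μ s ≤ K * ν univ := by
  set S : ℕ → Set X := fun n => {x ∈ s | ∃ r ∈ Ioc 0 (n : ℝ), c * μ (ball x r) ≤ ν (ball x r)}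
  have hS : Monotone S := fun m n hmn x ⟨hx, r, hr, hrx⟩ =>
    ⟨hx, r, ⟨hr.1, hr.2.trans (Nat.cast_le.2 hmn)⟩, hrx⟩
  have hs : s = ⋃ n, S n := by
    refine Subset.antisymm (fun x hx => ?_) (iUnion_subset fun n x hx => hx.1)
    obtain ⟨r, hr, hrx⟩ := h x hx
    obtain ⟨n, hn⟩ := exists_nat_ge r
    exact mem_iUnion.2 ⟨n, hx, r, ⟨hr, hn⟩, hrx⟩
  rw [hs, hS.measure_iUnion, ENNReal.mul_iSup]
  exact iSup_le fun n => mul_measure_le_of_forall_exists_ball_of_radius_le hτ hK fun x hx => hx.2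

end VitaliCovering

section AddHaar

variable {E : Type*} [NormedAddCommGroup E] [NormedSpace ℝ E] [FiniteDimensional ℝ E]
  [MeasurableSpace E] [BorelSpace E] {μ ν : Measure E} [μ.IsAddHaarMeasure] {s : Set E} {c : ℝ≥0∞}

theorem mul_addHaar_le_of_forall_exists_ball
    (h : ∀ x ∈ s, ∃ r > 0, c * μ (ball x r) ≤ ν (ball x r)) :
    c * μ s ≤ 3 ^ finrank ℝ E * ν univ := by
  have hbound : ∀ τ > (3 : ℝ), c * μ s ≤ ENNReal.ofReal (τ ^ finrank ℝ E) * ν univ := fun τ hτ =>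
    mul_measure_le_of_forall_exists_ball hτ (fun x r => le_of_eq <| by
      rw [Measure.addHaar_ball_mul_of_pos μ x (by linarith) r, Measure.addHaar_ball_center μ x]) h
  have hlim : Tendsto (fun τ : ℝ => ENNReal.ofReal (τ ^ finrank ℝ E)) (𝓝[>] 3)
      (𝓝 (3 ^ finrank ℝ E)) := by
    rw [← ENNReal.ofReal_ofNat 3, ← ENNReal.ofReal_pow zero_le_three]
    exact ((ENNReal.continuous_ofReal.comp (continuous_pow _)).tendsto 3).mono_left
      nhdsWithin_le_nhds
  exact ge_of_tendsto (ENNReal.Tendsto.mul_const hlim (Or.inl (by simp)))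
    (eventually_nhdsWithin_of_forall hbound)

end AddHaar

theorem exists_ball_mul_lt_of_lt_hlMaximal {d : ℕ} {f : EuclideanSpace ℝ (Fin d) → ℝ}
    {x : EuclideanSpace ℝ (Fin d)} {c : ℝ≥0∞} (hx : c < hlMaximal f x) :
    ∃ r > 0, c * volume (ball x r) < ∫⁻ y in ball x r, ‖f y‖₊ := by
  simp only [hlMaximal, lt_iSup_iff] at hx
  obtain ⟨r, hr, hcr⟩ := hx
  refine ⟨r, hr, ?_⟩
  rwa [ENNReal.lt_div_iff_mul_lt (Or.inl (measure_ball_pos _ _ hr).ne')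
    (Or.inl measure_ball_lt_top.ne)] at hcr

theorem hardy_littlewood_maximal_inequality_general {d : ℕ}
    (f : EuclideanSpace ℝ (Fin d) → ℝ)
    (α : ℝ) (hα : 0 < α) :
    volume {x | ENNReal.ofReal α < hlMaximal f x} ≤
      (3 ^ d / ENNReal.ofReal α) * ∫⁻ x, ‖f x‖₊ := by
  have hweak : ENNReal.ofReal α * volume {x | ENNReal.ofReal α < hlMaximal f x} ≤
      3 ^ d * ∫⁻ x, ‖f x‖₊ := by
    have := mul_addHaar_le_of_forall_exists_ball (μ := volume)
      (ν := volume.withDensity fun y => ‖f y‖₊) (s := {x | ENNReal.ofReal α < hlMaximal f x})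
      (c := ENNReal.ofReal α) fun x hx => by
        obtain ⟨r, hr, hlt⟩ := exists_ball_mul_lt_of_lt_hlMaximal hx
        exact ⟨r, hr, by rw [withDensity_apply _ measurableSet_ball]; exact hlt.le⟩
    rwa [finrank_euclideanSpace_fin, withDensity_apply _ MeasurableSet.univ,
      Measure.restrict_univ] at this
  rw [← ENNReal.mul_div_right_comm, ENNReal.le_div_iff_mul_le (Or.inl (by simpa using hα))
    (Or.inl ENNReal.ofReal_ne_top), mul_comm]
  exact hweak

theorem hardy_littlewood_maximal_inequality {d : ℕ}
    (f : EuclideanSpace ℝ (Fin d) → ℝ) (hf : Integrable f)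
    (α : ℝ) (hα : 0 < α) :
    volume {x | ENNReal.ofReal α < hlMaximal f x} ≤
      (3 ^ d / ENNReal.ofReal α) * ∫⁻ x, ‖f x‖₊ :=
  hardy_littlewood_maximal_inequality_general f α hα
end
end
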